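/- If G is a subcubic simple graph without isolated vertices satisfying ν_ac(G) < (n(G) − κ_G(K_{2,3}) − κ_G(K_4^+) − 2·κ_G(K_{3,3}))/4 and G has minimum order among all such graphs, then G has no endblock isomorphic to K_{2,3}; that is, there is no set B of five vertices of G inducing a subgraph isomorphic to K_{2,3} such that exactly one vertex of B has a neighbor outside B. -/

import Mathlib

open SimpleGraph

/-- `K4plus` is the graph obtained from `K_4` (on vertices 0,1,2,3) by subdividing
the edge between 0 and 1 once, using 4 as the subdivision vertex. -/
def K4plus : SimpleGraph (Fin 5) :=
  SimpleGraph.fromRel (fun a b =>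
    (a, b) ∈ ([(0,2),(0,3),(1,2),(1,3),(2,3),(0,4),(1,4)] : List (Fin 5 × Fin 5)))

/-- The complete bipartite graph `K_{2,3}`. -/
def K23 : SimpleGraph (Fin 2 ⊕ Fin 3) := completeBipartiteGraph (Fin 2) (Fin 3)

/-- The complete bipartite graph `K_{3,3}`. -/
def K33 : SimpleGraph (Fin 3 ⊕ Fin 3) := completeBipartiteGraph (Fin 3) (Fin 3)

/-- A matching `M` in `G` is acyclic if the subgraph of `G` induced by the set of
vertices incident to an edge of `M` is a forest. -/
def IsAcyclicMatching {V : Type*} (G : SimpleGraph V) (M : G.Subgraph) : Prop :=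
  M.IsMatching ∧ (G.induce M.support).IsAcyclic

/-- The acyclic matching number of `G`: the maximum number of edges of an acyclic
matching in `G`. -/
noncomputable def acyclicMatchingNumber {V : Type*} (G : SimpleGraph V) : ℕ :=
  sSup {k | ∃ M : G.Subgraph, IsAcyclicMatching G M ∧ M.edgeSet.ncard = k}

/-- `kappa G H` is the number of connected components of `G` whose induced subgraph
is isomorphic to `H`. -/
noncomputable def kappa {V W : Type*} (G : SimpleGraph V) (H : SimpleGraph W) : ℕ :=
  Nat.card {c : G.ConnectedComponent // Nonempty ((G.induce c.supp) ≃g H)}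

/-- A graph is subcubic if every vertex has degree at most 3. -/
def Subcubic {V : Type*} (G : SimpleGraph V) : Prop :=
  ∀ v, (G.neighborSet v).ncard ≤ 3

/-- A graph has no isolated vertices if every vertex has a neighbor. -/
def NoIsolatedVerts {V : Type*} (G : SimpleGraph V) : Prop :=
  ∀ v, ∃ w, G.Adj v w

/-- The lower bound `(n(G) - κ_G(K_{2,3}) - κ_G(K_4^+) - 2 κ_G(K_{3,3}))/4`. -/
noncomputable def acmBound {V : Type*} [Fintype V] (G : SimpleGraph V) : ℚ :=
  ((Fintype.card V : ℚ) - kappa G K23 - kappa G K4plus - 2 * kappa G K33) / 4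

/-- `G` is a counterexample of minimum order to the bound
`ν_ac(G) ≥ (n(G) - κ_G(K_{2,3}) - κ_G(K_4^+) - 2 κ_G(K_{3,3}))/4`
among subcubic graphs without isolated vertices. -/
def IsMinCounterexample {V : Type} [Fintype V] (G : SimpleGraph V) : Prop :=
  Subcubic G ∧ NoIsolatedVerts G ∧ (acyclicMatchingNumber G : ℚ) < acmBound G ∧
  ∀ (W : Type) [Fintype W] (H : SimpleGraph W),
    Subcubic H → NoIsolatedVerts H → (acyclicMatchingNumber H : ℚ) < acmBound H →
    Fintype.card V ≤ Fintype.card W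

/-! Let `B` induce `K_{2,3}` with `u` the only vertex of `B` having a neighbour outside `B`.
Since `u` has degree at most three and a neighbour outside `B`, it lies in the part of size
three, so deleting the four vertices of `B \ {u}` leaves a subcubic graph `H` without isolated
vertices in which `u` has degree at most one. Every component of `H` isomorphic to `K_{2,3}`,
`K_4^+` or `K_{3,3}` has minimum degree two, hence avoids `u` and is a component of `G`.
Picking an edge `ab` of `B \ {u}` with `b` not adjacent to `u`, any acyclic matching of `H`
extends by `ab`, since `a` and `b` are attached as leaves. So `ν_ac(H) ≤ ν_ac(G) - 1` and
`n(H) = n(G) - 4`, making `H` a smaller counterexample. -/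

namespace SimpleGraph

variable {V W : Type*} {G : SimpleGraph V}

theorem ncard_neighborSet_induce (s : Set V) (x : s) :
    ((G.induce s).neighborSet x).ncard = (G.neighborSet x ∩ s).ncard := by
  rw [neighborSet_induce, ← Set.ncard_image_of_injective _ Subtype.val_injective,
    Subtype.image_preimage_coe, Set.inter_comm]

theorem two_le_ncard_neighborSet [Finite V] {v y z : V} (hy : G.Adj v y) (hz : G.Adj v z)
    (hyz : y ≠ z) : 2 ≤ (G.neighborSet v).ncard :=
  (Set.one_lt_ncard_iff (Set.toFinite _)).mpr ⟨y, z, hy, hz, hyz⟩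

theorem Iso.ncard_neighborSet_eq {G' : SimpleGraph W} (e : G ≃g G') (v : V) :
    (G'.neighborSet (e v)).ncard = (G.neighborSet v).ncard := by
  rw [← Nat.card_coe_set_eq, ← Nat.card_coe_set_eq]
  exact Nat.card_congr (e.mapNeighborSet v).symm

theorem Iso.ncard_neighborSet_add_ncard_diff [Finite V] {H : SimpleGraph W}
    {B : Set V} (φ : G.induce B ≃g H) {u : V} (hu : u ∈ B) :
    (H.neighborSet (φ ⟨u, hu⟩)).ncard + (G.neighborSet u \ B).ncard =
      (G.neighborSet u).ncard := by
  rw [φ.ncard_neighborSet_eq, ncard_neighborSet_induce,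
    Set.ncard_inter_add_ncard_sdiff_eq_ncard _ _ (Set.toFinite _)]

theorem neighborSet_completeBipartiteGraph_inl {α β : Type*} (a : α) :
    (completeBipartiteGraph α β).neighborSet (.inl a) = Set.range .inr := by
  ext (b | b) <;> simp

theorem neighborSet_completeBipartiteGraph_inr {α β : Type*} (b : β) :
    (completeBipartiteGraph α β).neighborSet (.inr b) = Set.range .inl := by
  ext (a | a) <;> simp

def induceImageIso (G : SimpleGraph V) (s : Set V) (t : Set s) :
    G.induce (Subtype.val '' t) ≃g (G.induce s).induce t where
  toFun x := ⟨⟨x.1, Subtype.coe_image_subset s t x.2⟩, by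
    obtain ⟨y, hy, e⟩ := x.2
    exact (Subtype.ext e : y = ⟨x.1, _⟩) ▸ hy⟩
  invFun x := ⟨x.1.1, x.1, x.2, rfl⟩
  left_inv _ := rfl
  right_inv _ := rfl
  map_rel_iff' := Iff.rfl

theorem isAcyclic_induce_iff {s : Set V} :
    (G.induce s).IsAcyclic ↔ ∀ v (c : G.Walk v v), c.IsCycle → ∃ x ∈ c.support, x ∉ s := by
  constructor
  · intro h v c hc
    by_contra! hs
    refine h (c.induce s hs) ?_
    rwa [← Walk.isCycle_map_iff_of_injective (f := (Embedding.induce s).toHom)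
      Subtype.val_injective, Walk.map_induce]
  · intro h v c hc
    obtain ⟨x, hx, hxs⟩ := h _ _ (hc.map (f := (Embedding.induce s).toHom) Subtype.val_injective)
    rw [Walk.support_map, List.mem_map] at hx
    obtain ⟨y, -, rfl⟩ := hx
    exact hxs y.2

theorem IsAcyclic.induce_insert {t : Set V} {v : V} (ht : (G.induce t).IsAcyclic)
    (hv : (G.neighborSet v ∩ t).Subsingleton) : (G.induce (insert v t)).IsAcyclic := by
  classical
  rw [isAcyclic_induce_iff] at ht ⊢
  intro x c hc
  by_contra! hsub
  by_cases hvc : v ∈ c.support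
  · -- the two cycle-neighbours of `v` would both lie in `t`
    have hc' := hc.rotate hvc
    have hmem : ∀ y ∈ (c.rotate v hvc).support, G.Adj v y → y ∈ G.neighborSet v ∩ t :=
      fun y hy hadj => ⟨hadj,
        (hsub y ((Walk.mem_support_rotate_iff c v hvc).mp hy)).resolve_left hadj.ne'⟩
    exact hc'.snd_ne_penultimate (hv (hmem _ (Walk.getVert_mem_support ..)
      (Walk.adj_snd hc'.not_nil)) (hmem _ (Walk.getVert_mem_support ..)
      (Walk.adj_penultimate hc'.not_nil).symm))
  · obtain ⟨y, hy, hyt⟩ := ht _ c hc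
    exact hyt ((hsub y hy).resolve_left fun h => hvc (h ▸ hy))

theorem ConnectedComponent.supp_map_induce {s : Set V} (c : (G.induce s).ConnectedComponent)
    (hc : ∀ x ∈ c.supp, G.neighborSet x ⊆ s) :
    (c.map (Embedding.induce s).toHom).supp = Subtype.val '' c.supp := by
  induction c using ConnectedComponent.ind with | h x => ?_
  ext y
  rw [ConnectedComponent.map_mk, ConnectedComponent.mem_supp_iff, ConnectedComponent.eq]
  constructor
  · intro hy
    replace hy := (reachable_iff_reflTransGen _ _).mp hy.symm
    induction hy with
    | refl => exact ⟨x, rfl, rfl⟩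
    | tail _ hzy ih =>
      obtain ⟨z, hz, rfl⟩ := ih
      refine ⟨⟨_, hc z hz hzy⟩, ?_, rfl⟩
      rw [ConnectedComponent.mem_supp_iff] at hz ⊢
      rw [← hz]
      exact ConnectedComponent.sound (Adj.reachable (show (G.induce s).Adj z ⟨_, _⟩ from hzy)).symm
  · rintro ⟨z, hz, rfl⟩
    exact ((ConnectedComponent.exact hz).map (Embedding.induce s).toHom)

section Attachment

variable {B : Set V} {u : V}

theorem neighborSet_inter_compl_diff_singleton_self :
    G.neighborSet u ∩ (B \ {u})ᶜ = G.neighborSet u \ B := by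
  ext y
  simp only [Set.mem_inter_iff, Set.mem_compl_iff, Set.mem_sdiff, Set.mem_singleton_iff,
    mem_neighborSet]
  constructor
  · rintro ⟨huy, hy⟩
    exact ⟨huy, fun hyB => hy ⟨hyB, huy.ne'⟩⟩
  · rintro ⟨huy, hy⟩
    exact ⟨huy, fun h => hy h.1⟩

theorem neighborSet_subset_compl_diff_singleton (hB : ∀ x ∈ B, x ≠ u → G.neighborSet x ⊆ B)
    {x : V} (hx : x ∈ (B \ {u})ᶜ) (hxu : x ≠ u) :
    G.neighborSet x ⊆ (B \ {u})ᶜ :=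
  fun y hxy hy => hx ⟨hB y hy.1 hy.2 hxy.symm, hxu⟩

theorem neighborSet_inter_compl_diff_singleton_subset
    (hB : ∀ x ∈ B, x ≠ u → G.neighborSet x ⊆ B) {x : V} (hx : x ∈ B \ {u}) :
    G.neighborSet x ∩ (B \ {u})ᶜ ⊆ {u} :=
  fun _ ⟨hxy, hy⟩ => by_contra fun hyu => hy ⟨hB x hx.1 hx.2 hxy, hyu⟩

theorem subsingleton_neighborSet_inter_compl_diff_singleton
    (hB : ∀ x ∈ B, x ≠ u → G.neighborSet x ⊆ B) {x : V} (hx : x ∈ B \ {u}) :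
    (G.neighborSet x ∩ (B \ {u})ᶜ).Subsingleton :=
  Set.subsingleton_singleton.anti (neighborSet_inter_compl_diff_singleton_subset hB hx)

theorem disjoint_neighborSet_compl_diff_singleton
    (hB : ∀ x ∈ B, x ≠ u → G.neighborSet x ⊆ B) {x : V} (hx : x ∈ B \ {u})
    (hxu : ¬G.Adj x u) : Disjoint (G.neighborSet x) (B \ {u})ᶜ :=
  Set.disjoint_left.mpr fun y hxy hy =>
    hxu ((neighborSet_inter_compl_diff_singleton_subset hB hx ⟨hxy, hy⟩ : y = u) ▸ hxy)

end Attachment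

end SimpleGraph

section

variable {V W : Type*} {G : SimpleGraph V}

theorem Subcubic.induce [Finite V] (hG : Subcubic G) (s : Set V) :
    Subcubic (G.induce s) := fun x => by
  rw [ncard_neighborSet_induce]
  exact (Set.ncard_le_ncard Set.inter_subset_left (Set.toFinite _)).trans (hG x)

theorem NoIsolatedVerts.induce_compl_diff_singleton {B : Set V} {u w : V}
    (hG : NoIsolatedVerts G) (hB : ∀ x ∈ B, x ≠ u → G.neighborSet x ⊆ B) (hw : w ∉ B)
    (huw : G.Adj u w) : NoIsolatedVerts (G.induce (B \ {u})ᶜ) := by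
  rintro ⟨x, hx⟩
  by_cases hxu : x = u
  · subst hxu
    exact ⟨⟨w, fun h => hw h.1⟩, huw⟩
  · obtain ⟨y, hy⟩ := hG x
    exact ⟨⟨y, neighborSet_subset_compl_diff_singleton hB hx hxu hy⟩, hy⟩

theorem kappa_induce_le [Finite V] {s : Set V} {u : V}
    (hs : ∀ x ∈ s, x ≠ u → G.neighborSet x ⊆ s) (hu : (G.neighborSet u ∩ s).ncard ≤ 1)
    {H : SimpleGraph W} (hH : ∀ w, 2 ≤ (H.neighborSet w).ncard) :
    kappa (G.induce s) H ≤ kappa G H := by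
  -- a component isomorphic to `H` has minimum degree two, so it avoids `u` and is a
  -- component of `G` as well
  have hclosed : ∀ c : (G.induce s).ConnectedComponent,
      Nonempty ((G.induce s).induce c.supp ≃g H) → ∀ x ∈ c.supp, G.neighborSet x ⊆ s := by
    rintro c ⟨e⟩ x hx
    refine hs x x.2 fun hxu => ?_
    have hdeg := hH (e ⟨x, hx⟩)
    rw [e.ncard_neighborSet_eq, ncard_neighborSet_induce] at hdeg
    dsimp only at hdeg
    have hle := Set.ncard_le_ncard
      (Set.inter_subset_left : (G.induce s).neighborSet x ∩ c.supp ⊆ _) (Set.toFinite _)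
    rw [ncard_neighborSet_induce, hxu] at hle
    omega
  refine Nat.card_le_card_of_injective
    (fun c => ⟨c.1.map (Embedding.induce s).toHom, ?_⟩) ?_
  · rw [ConnectedComponent.supp_map_induce c.1 (hclosed c.1 c.2)]
    exact ⟨(induceImageIso G s c.1.supp).trans c.2.some⟩
  · rintro ⟨c₁, h₁⟩ ⟨c₂, h₂⟩ h
    have hsupp := congrArg ConnectedComponent.supp (congrArg Subtype.val h)
    simp only [ConnectedComponent.supp_map_induce _ (hclosed _ h₁),
      ConnectedComponent.supp_map_induce _ (hclosed _ h₂)] at hsupp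
    exact Subtype.ext (ConnectedComponent.supp_injective
      (Set.image_injective.mpr Subtype.val_injective hsupp))

theorem isAcyclicMatching_bot (G : SimpleGraph V) : IsAcyclicMatching G ⊥ :=
  ⟨fun _ hv => hv.elim, fun v _ _ => (Subgraph.mem_support _).mp v.2 |>.elim fun _ h => h.elim⟩

theorem bddAbove_acyclicMatching_ncard [Finite V] (G : SimpleGraph V) :
    BddAbove {k | ∃ M : G.Subgraph, IsAcyclicMatching G M ∧ M.edgeSet.ncard = k} :=
  ⟨Nat.card (Sym2 V), by rintro _ ⟨M, -, rfl⟩; exact Set.ncard_le_card _⟩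

theorem IsAcyclicMatching.ncard_edgeSet_le [Finite V] {M : G.Subgraph}
    (hM : IsAcyclicMatching G M) : M.edgeSet.ncard ≤ acyclicMatchingNumber G :=
  le_csSup (bddAbove_acyclicMatching_ncard G) ⟨M, hM, rfl⟩

theorem exists_isAcyclicMatching_ncard_eq [Finite V] (G : SimpleGraph V) :
    ∃ M : G.Subgraph, IsAcyclicMatching G M ∧ M.edgeSet.ncard = acyclicMatchingNumber G :=
  Nat.sSup_mem (by exact ⟨_, ⊥, isAcyclicMatching_bot G, rfl⟩) (bddAbove_acyclicMatching_ncard G)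

theorem acyclicMatchingNumber_induce_add_one_le [Finite V] {s : Set V} {a b : V}
    (hab : G.Adj a b) (ha : a ∉ s) (hb : b ∉ s) (has : (G.neighborSet a ∩ s).Subsingleton)
    (hbs : Disjoint (G.neighborSet b) s) :
    acyclicMatchingNumber (G.induce s) + 1 ≤ acyclicMatchingNumber G := by
  classical
  obtain ⟨M', ⟨hM', hM'ac⟩, hM'card⟩ := exists_isAcyclicMatching_ncard_eq (G.induce s)
  set ι := (Embedding.induce s).toHom
  set M := M'.map ι ⊔ G.subgraphOfAdj hab
  have hM : M.IsMatching := by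
    refine (hM'.map ι Subtype.val_injective).sup (.subgraphOfAdj hab) ?_
    rw [(hM'.map ι Subtype.val_injective).support_eq_verts,
      (Subgraph.IsMatching.subgraphOfAdj hab).support_eq_verts, Subgraph.map_verts,
      subgraphOfAdj_verts, Set.disjoint_right]
    rintro x hx ⟨y, -, rfl⟩
    rcases hx with rfl | rfl
    exacts [ha y.2, hb y.2]
  have hsupp : M.support = insert b (insert a (Subtype.val '' M'.support)) := by
    rw [hM.support_eq_verts, Subgraph.verts_sup, Subgraph.map_verts, subgraphOfAdj_verts,
      hM'.support_eq_verts]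
    ext x
    simp only [Set.mem_union, Set.mem_insert_iff, Set.mem_singleton_iff]
    tauto
  -- `a` and then `b` are attached as leaves to the forest spanned by `M'`
  have hacyc : (G.induce M.support).IsAcyclic := by
    have himage : Subtype.val '' M'.support ⊆ s := Subtype.coe_image_subset _ _
    rw [hsupp]
    refine (((induceImageIso G s M'.support).isAcyclic_iff.mpr hM'ac).induce_insert
      (has.anti (Set.inter_subset_inter_right _ himage))).induce_insert
      ((Set.subsingleton_singleton (a := a)).anti ?_)
    rintro x ⟨hbx, hx | hx⟩
    · exact hx
    · exact absurd (himage hx) (Set.disjoint_left.mp hbs hbx)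
  have hcard : M.edgeSet.ncard = M'.edgeSet.ncard + 1 := by
    rw [Subgraph.edgeSet_sup, Subgraph.edgeSet_map, edgeSet_subgraphOfAdj, Set.union_singleton,
      Set.ncard_insert_of_notMem, Set.ncard_image_of_injective _
        (Sym2.map.injective (f := ι) Subtype.val_injective)]
    rintro ⟨e, -, he⟩
    obtain ⟨y, -, rfl⟩ := Sym2.mem_map.mp (he ▸ Sym2.mem_mk_left a b)
    exact ha y.2
  calc acyclicMatchingNumber (G.induce s) + 1 = M.edgeSet.ncard := by rw [hcard, hM'card]
    _ ≤ acyclicMatchingNumber G := IsAcyclicMatching.ncard_edgeSet_le ⟨hM, hacyc⟩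

end

theorem ncard_neighborSet_K23_inl (i : Fin 2) : (K23.neighborSet (.inl i)).ncard = 3 := by
  simp [K23, neighborSet_completeBipartiteGraph_inl, Set.ncard_range_of_injective Sum.inr_injective]

theorem ncard_neighborSet_K23_inr (j : Fin 3) : (K23.neighborSet (.inr j)).ncard = 2 := by
  simp [K23, neighborSet_completeBipartiteGraph_inr, Set.ncard_range_of_injective Sum.inl_injective]

theorem two_le_ncard_neighborSet_K23 (x : Fin 2 ⊕ Fin 3) : 2 ≤ (K23.neighborSet x).ncard := by
  rcases x with i | j
  · rw [ncard_neighborSet_K23_inl]; omega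
  · rw [ncard_neighborSet_K23_inr]

theorem two_le_ncard_neighborSet_K33 (x : Fin 3 ⊕ Fin 3) : 2 ≤ (K33.neighborSet x).ncard := by
  rcases x with i | j <;>
  simp [K33, neighborSet_completeBipartiteGraph_inl, neighborSet_completeBipartiteGraph_inr,
    Set.ncard_range_of_injective Sum.inr_injective, Set.ncard_range_of_injective Sum.inl_injective]

set_option synthInstance.maxSize 1024 in
theorem two_le_ncard_neighborSet_K4plus (x : Fin 5) : 2 ≤ (K4plus.neighborSet x).ncard := by
  obtain ⟨y, z, hy, hz, hyz⟩ : ∃ y z, K4plus.Adj x y ∧ K4plus.Adj x z ∧ y ≠ z := by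
    simp only [K4plus, fromRel_adj]
    revert x
    decide
  exact two_le_ncard_neighborSet hy hz hyz

theorem K23_exists_adj_not_adj_inr (j : Fin 3) :
    ∃ x y, K23.Adj x y ∧ x ≠ .inr j ∧ y ≠ .inr j ∧ ¬K23.Adj y (.inr j) := by
  simp only [K23, completeBipartiteGraph_adj]
  revert j
  decide

namespace SimpleGraph

variable {V : Type*} {G : SimpleGraph V}

theorem Iso.K23_apply_eq_inr [Finite V] {B : Set V} (φ : G.induce B ≃g K23) {u : V}
    (huB : u ∈ B) (hu : (G.neighborSet u).ncard ≤ 3) (hout : (G.neighborSet u \ B).Nonempty) :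
    ∃ j, φ ⟨u, huB⟩ = .inr j := by
  rcases hφ : φ ⟨u, huB⟩ with i | j
  · have hsplit := φ.ncard_neighborSet_add_ncard_diff huB
    have hpos := (Set.ncard_pos (Set.toFinite _)).mpr hout
    rw [hφ, ncard_neighborSet_K23_inl] at hsplit
    omega
  · exact ⟨j, rfl⟩

theorem Iso.K23_exists_adj_not_adj {B : Set V} (φ : G.induce B ≃g K23) {u : V} (huB : u ∈ B)
    {j : Fin 3} (hj : φ ⟨u, huB⟩ = .inr j) :
    ∃ a ∈ B, ∃ b ∈ B, a ≠ u ∧ b ≠ u ∧ G.Adj a b ∧ ¬G.Adj b u := by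
  obtain ⟨x, y, hxy, hx, hy, hyj⟩ := K23_exists_adj_not_adj_inr j
  have hne : ∀ z, z ≠ .inr j → (φ.symm z).1 ≠ u := fun z hz h => hz <| by
    rw [← hj, ← (Subtype.ext h : φ.symm z = ⟨u, huB⟩), φ.apply_symm_apply]
  refine ⟨_, (φ.symm x).2, _, (φ.symm y).2, hne x hx, hne y hy, ?_, ?_⟩
  · exact φ.symm.map_adj_iff.mpr hxy
  · rw [← hj, ← φ.apply_symm_apply y] at hyj
    exact fun h => hyj (φ.map_adj_iff.mpr h)

end SimpleGraph

theorem IsMinCounterexample.four_mul_acyclicMatchingNumber_lt {V : Type} [Fintype V]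
    {G : SimpleGraph V} (hG : IsMinCounterexample G) {s : Set V} {u : V} (hne : sᶜ.Nonempty)
    (hs : ∀ x ∈ s, x ≠ u → G.neighborSet x ⊆ s) (hu : (G.neighborSet u ∩ s).ncard ≤ 1)
    (hiso : NoIsolatedVerts (G.induce s)) :
    4 * acyclicMatchingNumber G < 4 * acyclicMatchingNumber (G.induce s) + sᶜ.ncard := by
  classical
  obtain ⟨hsub, -, hlt, hmin⟩ := hG
  by_contra! hν
  have hcard : Fintype.card s + sᶜ.ncard = Fintype.card V := by
    rw [Fintype.card_eq_nat_card, Nat.card_coe_set_eq, Set.ncard_add_ncard_compl,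
      Nat.card_eq_fintype_card]
  have hpos : 0 < sᶜ.ncard := (Set.ncard_pos (Set.toFinite _)).mpr hne
  refine absurd (hmin s (G.induce s) (hsub.induce s) hiso ?_) (by omega)
  have h23 := kappa_induce_le hs hu two_le_ncard_neighborSet_K23
  have h4 := kappa_induce_le hs hu two_le_ncard_neighborSet_K4plus
  have h33 := kappa_induce_le hs hu two_le_ncard_neighborSet_K33
  have hcardQ : (Fintype.card s : ℚ) + sᶜ.ncard = Fintype.card V := by exact_mod_cast hcard
  have hνQ : (4 * acyclicMatchingNumber (G.induce s) + sᶜ.ncard : ℚ) ≤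
      4 * acyclicMatchingNumber G := by exact_mod_cast hν
  unfold acmBound at hlt ⊢
  have : (kappa (G.induce s) K23 : ℚ) ≤ kappa G K23 := by exact_mod_cast h23
  have : (kappa (G.induce s) K4plus : ℚ) ≤ kappa G K4plus := by exact_mod_cast h4
  have : (kappa (G.induce s) K33 : ℚ) ≤ kappa G K33 := by exact_mod_cast h33
  linarith

/-- A minimum-order counterexample has no endblock isomorphic to `K_{2,3}`:
there is no set `B` of five vertices inducing a subgraph isomorphic to `K_{2,3}`
such that exactly one vertex of `B` has a neighbor outside `B`. -/
theorem stmt_3 {V : Type} [Fintype V] (G : SimpleGraph V)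
    (hmin : IsMinCounterexample G) :
    ¬ ∃ B : Set V, B.ncard = 5 ∧ Nonempty ((G.induce B) ≃g K23) ∧
      (∃! u : V, u ∈ B ∧ ∃ w : V, w ∉ B ∧ G.Adj u w) := by
  rintro ⟨B, hB5, ⟨φ⟩, u, ⟨huB, w, hwB, huw⟩, huniq⟩
  have hB : ∀ x ∈ B, x ≠ u → G.neighborSet x ⊆ B := fun x hx hxu y hxy =>
    by_contra fun hy => hxu (huniq x ⟨hx, y, hy, hxy⟩)
  have hout : (G.neighborSet u \ B).Nonempty := ⟨w, huw, hwB⟩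
  obtain ⟨j, hj⟩ := φ.K23_apply_eq_inr huB (hmin.1 u) hout
  obtain ⟨a, haB, b, hbB, hau, hbu, hab, hbu'⟩ := φ.K23_exists_adj_not_adj huB hj
  have hu : (G.neighborSet u ∩ (B \ {u})ᶜ).ncard ≤ 1 := by
    have := φ.ncard_neighborSet_add_ncard_diff huB
    rw [hj, ncard_neighborSet_K23_inr] at this
    have := hmin.1 u
    rw [neighborSet_inter_compl_diff_singleton_self]
    omega
  have hlt := hmin.four_mul_acyclicMatchingNumber_lt ⟨a, by simpa using ⟨haB, hau⟩⟩
    (fun _ => neighborSet_subset_compl_diff_singleton hB) hu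
    (hmin.2.1.induce_compl_diff_singleton hB hwB huw)
  have hν := acyclicMatchingNumber_induce_add_one_le hab (by simpa using ⟨haB, hau⟩)
    (by simpa using ⟨hbB, hbu⟩) (subsingleton_neighborSet_inter_compl_diff_singleton hB ⟨haB, hau⟩)
    (disjoint_neighborSet_compl_diff_singleton hB ⟨hbB, hbu⟩ hbu')
  have h4 : (B \ {u})ᶜᶜ.ncard = 4 := by
    rw [compl_compl, Set.ncard_sdiff_singleton_of_mem huB, hB5]
  omega
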